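/- There exists a real number u with 0 < u < 1/8 satisfying 288u³ − 64u² − 8u + 1 = 0, and there exist 17 unit vectors x_1, …, x_17 in EuclideanSpace ℝ (Fin 8) such that ⟨x_i, x_j⟩ ≤ u for all i ≠ j. -/

import Mathlib

open scoped InnerProductSpace

/-!
Take a pole `p`, the vertices `w₀, …, w₇` of a regular simplex in `p⊥` (so `⟪wᵢ, wⱼ⟫ = -1/7`),
the eight points `u p + √(1 - u²) wᵢ` at height `u` and the eight points `-β p - √(1 - β²) wᵢ`
at height `-β`, where `β = √((7u + 1)/8)`. This choice of `β` makes the inner products within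
the lower layer equal to `u`, and the cubic is exactly the condition that
`u p + √(1 - u²) wᵢ` and `-β p - √(1 - β²) wⱼ` (`i ≠ j`) have inner product `u` too;
all other inner products are smaller.
-/

section Layers

variable {E : Type*} [NormedAddCommGroup E] [InnerProductSpace ℝ E]

noncomputable def layerPoint (p : E) (h : ℝ) (v : E) : E := h • p + √(1 - h^2) • v

variable {p v v' : E}

theorem inner_layerPoint_layerPoint (hp : ‖p‖ = 1) (hv : ⟪p, v⟫_ℝ = 0) (hv' : ⟪p, v'⟫_ℝ = 0)
    (h h' : ℝ) :
    ⟪layerPoint p h v, layerPoint p h' v'⟫_ℝ = h*h' + √(1 - h^2) * √(1 - h'^2) * ⟪v, v'⟫_ℝ := by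
  simp only [layerPoint, inner_add_left, inner_add_right, real_inner_smul_left,
    real_inner_smul_right, real_inner_self_eq_norm_sq, hp, hv, hv', real_inner_comm p v]
  ring

theorem inner_layerPoint_right (hp : ‖p‖ = 1) (hv : ⟪p, v⟫_ℝ = 0) (h : ℝ) :
    ⟪p, layerPoint p h v⟫_ℝ = h := by
  simp [layerPoint, inner_add_right, real_inner_smul_right, hp, hv]

theorem norm_layerPoint (hp : ‖p‖ = 1) (hv : ⟪p, v⟫_ℝ = 0) (hv1 : ‖v‖ = 1) {h : ℝ}
    (hh : h^2 ≤ 1) : ‖layerPoint p h v‖ = 1 := by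
  rw [norm_eq_sqrt_real_inner, inner_layerPoint_layerPoint hp hv hv, real_inner_self_eq_norm_sq,
    hv1, Real.mul_self_sqrt (by linarith)]
  convert Real.sqrt_one using 2
  ring

end Layers

section Simplex

variable {n : ℕ}

local notation "𝔼" => EuclideanSpace ℝ (Fin (n + 1))

noncomputable def onesVec : 𝔼 := WithLp.toLp 2 fun _ => 1

theorem inner_onesVec_self : ⟪(onesVec : 𝔼), onesVec⟫_ℝ = n + 1 := by
  rw [onesVec, PiLp.inner_apply]
  simp

theorem inner_single_onesVec (m : Fin (n + 1)) :
    ⟪EuclideanSpace.single m (1 : ℝ), (onesVec : 𝔼)⟫_ℝ = 1 := by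
  simp [onesVec, EuclideanSpace.inner_single_left]

noncomputable def centeredBasisVec (m : Fin (n + 1)) : 𝔼 :=
  EuclideanSpace.single m 1 - ((n : ℝ) + 1)⁻¹ • onesVec

theorem inner_onesVec_centeredBasisVec (m : Fin (n + 1)) :
    ⟪onesVec, centeredBasisVec m⟫_ℝ = 0 := by
  rw [centeredBasisVec, inner_sub_right, real_inner_smul_right, real_inner_comm,
    inner_single_onesVec, inner_onesVec_self, inv_mul_cancel₀ (by positivity), sub_self]

theorem inner_centeredBasisVec (m m' : Fin (n + 1)) :
    ⟪centeredBasisVec m, centeredBasisVec m'⟫_ℝ =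
      (if m = m' then 1 else 0) - ((n : ℝ) + 1)⁻¹ := by
  rw [centeredBasisVec, inner_sub_left, real_inner_smul_left, inner_onesVec_centeredBasisVec,
    centeredBasisVec, inner_sub_right, real_inner_smul_right, inner_single_onesVec,
    EuclideanSpace.inner_single_left]
  simp

theorem exists_unit_vec_and_orthogonal_regular_simplex (hn : 0 < n) :
    ∃ p : 𝔼, ‖p‖ = 1 ∧ ∃ w : Fin (n + 1) → 𝔼,
      (∀ m, ‖w m‖ = 1) ∧ (∀ m, ⟪p, w m⟫_ℝ = 0) ∧ ∀ m m', m ≠ m' → ⟪w m, w m'⟫_ℝ = -1/n := by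
  have hn' : (0 : ℝ) < n := Nat.cast_pos.mpr hn
  have inner_w (m m' : Fin (n + 1)) :
      ⟪√((n + 1)/n) • centeredBasisVec m, √((n + 1)/n) • centeredBasisVec m'⟫_ℝ =
        (n + 1)/n * ((if m = m' then 1 else 0) - ((n : ℝ) + 1)⁻¹) := by
    rw [real_inner_smul_left, real_inner_smul_right, ← mul_assoc,
      Real.mul_self_sqrt (by positivity), inner_centeredBasisVec]
  refine ⟨(√(n + 1))⁻¹ • onesVec, ?_, fun m => √((n + 1)/n) • centeredBasisVec m, ?_, ?_, ?_⟩
  · rw [norm_smul, norm_eq_sqrt_real_inner (onesVec : 𝔼), inner_onesVec_self, norm_inv,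
      Real.norm_of_nonneg (by positivity), inv_mul_cancel₀ (by positivity)]
  · intro m
    rw [norm_eq_sqrt_real_inner, inner_w, if_pos rfl, ← Real.sqrt_one]
    congr 1
    field_simp
    ring
  · intro m
    rw [real_inner_smul_left, real_inner_smul_right, inner_onesVec_centeredBasisVec,
      mul_zero, mul_zero]
  · intro m m' hm
    rw [inner_w, if_neg hm]
    field_simp
    ring

end Simplex

section Cubic

theorem exists_root_cubic_mem_Ioo :
    ∃ u : ℝ, 0 < u ∧ u < 1/10 ∧ 288*u^3 - 64*u^2 - 8*u + 1 = 0 := by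
  obtain ⟨u, ⟨hu0, hu1⟩, hroot⟩ :
      ∃ u ∈ Set.Icc (0:ℝ) (1/10), 288*u^3 - 64*u^2 - 8*u + 1 = 0 :=
    intermediate_value_Icc' (by norm_num) (by fun_prop) ⟨by norm_num, by norm_num⟩
  refine ⟨u, hu0.lt_of_ne ?_, hu1.lt_of_ne ?_, hroot⟩ <;> rintro rfl <;> norm_num at hroot

variable {u : ℝ}

theorem sqrt_seven_mul_add_one_div_eight_of_root (hroot : 288*u^3 - 64*u^2 - 8*u + 1 = 0)
    (hu0 : 0 < u) (hu1 : u < 1/10) :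
    √((7*u + 1)/8) = (1 - 2*u - 64*u^2)/(96*u^2) := by
  rw [Real.sqrt_eq_iff_eq_sq (by positivity) (div_nonneg (by nlinarith) (by positivity))]
  field_simp
  linear_combination (-8*(1 + 4*u - 28*u^2)) * hroot

theorem sqrt_mul_sqrt_eq_of_root (hroot : 288*u^3 - 64*u^2 - 8*u + 1 = 0)
    (hu0 : 0 < u) (hu1 : u < 1/10) :
    √(1 - u^2) * √(1 - √((7*u + 1)/8)^2) = 7*u*(1 + √((7*u + 1)/8)) := by
  rw [Real.sq_sqrt (by positivity), ← Real.sqrt_mul (by nlinarith),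
    Real.sqrt_eq_iff_eq_sq (by nlinarith) (by positivity),
    sqrt_seven_mul_add_one_div_eight_of_root hroot hu0 hu1]
  field_simp
  linear_combination (-392 - 1568*u + 224*u^2) * hroot

end Cubic

section Code

variable {E ι κ : Type*} [NormedAddCommGroup E] [InnerProductSpace ℝ E]

def IsSphericalCode (x : ι → E) (u : ℝ) : Prop :=
  (∀ i, ‖x i‖ = 1) ∧ ∀ i j, i ≠ j → ⟪x i, x j⟫_ℝ ≤ u

theorem IsSphericalCode.comp_injective {x : ι → E} {u : ℝ} (hx : IsSphericalCode x u)
    {f : κ → ι} (hf : Function.Injective f) : IsSphericalCode (x ∘ f) u :=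
  ⟨fun i => hx.1 (f i), fun _ _ hij => hx.2 _ _ (hf.ne hij)⟩

noncomputable def twoLayerCode (p : E) (w : ι → E) (u β : ℝ) : Option (ι ⊕ ι) → E
  | none => p
  | some (.inl m) => layerPoint p u (w m)
  | some (.inr m) => layerPoint p (-β) (-w m)

theorem isSphericalCode_twoLayerCode {p : E} {w : ι → E} (hp : ‖p‖ = 1)
    (hw : ∀ m, ‖w m‖ = 1) (hpw : ∀ m, ⟪p, w m⟫_ℝ = 0)
    (hsimplex : ∀ m m', m ≠ m' → ⟪w m, w m'⟫_ℝ = -1/7) {u : ℝ}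
    (hroot : 288*u^3 - 64*u^2 - 8*u + 1 = 0) (hu0 : 0 < u) (hu1 : u < 1/10) :
    IsSphericalCode (twoLayerCode p w u √((7*u + 1)/8)) u := by
  set β := √((7*u + 1)/8)
  set x := twoLayerCode p w u β
  have hβ0 : 0 ≤ β := Real.sqrt_nonneg _
  have hβ2 : β^2 = (7*u + 1)/8 := Real.sq_sqrt (by positivity)
  have hpw' (m : ι) : ⟪p, -w m⟫_ℝ = 0 := by rw [inner_neg_right, hpw, neg_zero]
  have pole (m : ι ⊕ ι) : ⟪x none, x (some m)⟫_ℝ ≤ u := by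
    rcases m with m | m
    · exact (inner_layerPoint_right hp (hpw m) u).le
    · dsimp only [x, twoLayerCode]
      rw [inner_layerPoint_right hp (hpw' m)]
      linarith
  have cross (i j : ι) : ⟪x (some (.inl i)), x (some (.inr j))⟫_ℝ ≤ u := by
    dsimp only [x, twoLayerCode]
    rw [inner_layerPoint_layerPoint hp (hpw i) (hpw' j), inner_neg_right, neg_sq,
      sqrt_mul_sqrt_eq_of_root hroot hu0 hu1]
    rcases eq_or_ne i j with rfl | hij
    · rw [real_inner_self_eq_norm_sq, hw]
      nlinarith
    · rw [hsimplex i j hij]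
      linarith
  refine ⟨?_, ?_⟩
  · rintro (_ | m | m)
    · exact hp
    · exact norm_layerPoint hp (hpw m) (hw m) (by nlinarith)
    · exact norm_layerPoint hp (hpw' m) (by rw [norm_neg, hw]) (by nlinarith)
  · rintro (_ | i | i) (_ | j | j) hij
    · exact absurd rfl hij
    · exact pole _
    · exact pole _
    · rw [real_inner_comm]; exact pole _
    · have hij' : i ≠ j := fun h => hij (h ▸ rfl)
      dsimp only [x, twoLayerCode]
      rw [inner_layerPoint_layerPoint hp (hpw i) (hpw j), hsimplex i j hij',
        Real.mul_self_sqrt (by nlinarith)]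
      nlinarith
    · exact cross i j
    · rw [real_inner_comm]; exact pole _
    · rw [real_inner_comm]; exact cross j i
    · have hij' : i ≠ j := fun h => hij (h ▸ rfl)
      dsimp only [x, twoLayerCode]
      rw [inner_layerPoint_layerPoint hp (hpw' i) (hpw' j), inner_neg_neg, hsimplex i j hij',
        Real.mul_self_sqrt (by nlinarith)]
      nlinarith

end Code

/-- There exists `u` with `0 < u < 1/8` satisfying `288u³ - 64u² - 8u + 1 = 0`, and
17 unit vectors in `EuclideanSpace ℝ (Fin 8)` whose pairwise inner products are all
at most `u`. -/
theorem exists_spherical_code_17_points_dim8 :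
    ∃ u : ℝ, 0 < u ∧ u < 1/8 ∧ 288*u^3 - 64*u^2 - 8*u + 1 = 0 ∧
      ∃ x : Fin 17 → EuclideanSpace ℝ (Fin 8),
        (∀ i, ‖x i‖ = 1) ∧ ∀ i j, i ≠ j → ⟪x i, x j⟫_ℝ ≤ u := by
  obtain ⟨u, hu0, hu1, hroot⟩ := exists_root_cubic_mem_Ioo
  obtain ⟨p, hp, w, hw, hpw, hsimplex⟩ :=
    exists_unit_vec_and_orthogonal_regular_simplex (n := 7) (by norm_num)
  have hcode := isSphericalCode_twoLayerCode hp hw hpw (by exact_mod_cast hsimplex) hroot hu0 hu1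
  let e : Fin 17 ≃ Option (Fin 8 ⊕ Fin 8) :=
    (finSuccEquiv 16).trans (Equiv.optionCongr (finSumFinEquiv (m := 8) (n := 8)).symm)
  exact ⟨u, hu0, by linarith, hroot, _, hcode.comp_injective e.injective⟩
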